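/- Let X = (X₁,…,X_d) be a random vector whose joint distribution function F is a MEV distribution with unit Fréchet marginals, and let I₁, I₂ be disjoint non-empty subsets of {1,…,d}. Then for all x, y > 0: x ε_{I₁} = E(M(I₁)^{1/x}) / (1 − E(M(I₁)^{1/x})), y ε_{I₂} = E(M(I₂)^{1/y}) / (1 − E(M(I₂)^{1/y})), and l^{(I₁,I₂)}(x^{-1}, y^{-1}) = E( M(I₁)^{1/x} ∨ M(I₂)^{1/y} ) / ( 1 − E( M(I₁)^{1/x} ∨ M(I₂)^{1/y} ) ). -/

import Mathlib

open MeasureTheory Filter Finset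

/-- The joint distribution function of the random vector `X` under `μ`. -/
noncomputable def jointCDF {Ω : Type*} [MeasurableSpace Ω] (μ : Measure Ω) {d : ℕ}
    (X : Fin d → Ω → ℝ) (x : Fin d → ℝ) : ℝ :=
  (μ {ω | ∀ i, X i ω ≤ x i}).toReal

/-- The marginal distribution function of the `i`-th coordinate of `X` under `μ`. -/
noncomputable def margCDF {Ω : Type*} [MeasurableSpace Ω] (μ : Measure Ω) {d : ℕ}
    (X : Fin d → Ω → ℝ) (i : Fin d) (u : ℝ) : ℝ :=
  (μ {ω | X i ω ≤ u}).toReal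

/-- `l^{(I₁,I₂)}(x,y) = -log F(a₁,…,a_d)` where `aᵢ = x` on `I₁`, `aᵢ = y` on `I₂` and
`aᵢ = ∞` otherwise (taking the limit of `F` in those arguments, i.e. dropping the
corresponding constraints). -/
noncomputable def mevL {Ω : Type*} [MeasurableSpace Ω] (μ : Measure Ω) {d : ℕ}
    (X : Fin d → Ω → ℝ) (I₁ I₂ : Finset (Fin d)) (x y : ℝ) : ℝ :=
  -Real.log (μ {ω | (∀ i ∈ I₁, X i ω ≤ x) ∧ (∀ j ∈ I₂, X j ω ≤ y)}).toReal

/-- The extremal coefficient `ε_I = l^{(I,∅)}(1,1)` of the sub-vector `X_I`. -/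
noncomputable def extCoef {Ω : Type*} [MeasurableSpace Ω] (μ : Measure Ω) {d : ℕ}
    (X : Fin d → Ω → ℝ) (I : Finset (Fin d)) : ℝ :=
  mevL μ X I ∅ 1 1

/-- `M(I) = max_{i ∈ I} F_i(X_i)`. -/
noncomputable def Msub {Ω : Type*} [MeasurableSpace Ω] (μ : Measure Ω) {d : ℕ}
    (X : Fin d → Ω → ℝ) (I : Finset (Fin d)) (hI : I.Nonempty) (ω : Ω) : ℝ :=
  I.sup' hI fun i => margCDF μ X i (X i ω)

/-- The stable tail dependence function `l(x₁,…,x_d) = -log F(x₁,…,x_d)`. -/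
noncomputable def stdf {Ω : Type*} [MeasurableSpace Ω] (μ : Measure Ω) {d : ℕ}
    (X : Fin d → Ω → ℝ) (x : Fin d → ℝ) : ℝ :=
  -Real.log (jointCDF μ X x)

/-- `X` has a multivariate extreme value (max-stable) distribution with unit Fréchet
marginals under the probability measure `μ`. -/
structure IsMEVFrechet {Ω : Type*} [MeasurableSpace Ω] (μ : Measure Ω) {d : ℕ}
    (X : Fin d → Ω → ℝ) : Prop where
  meas : ∀ i, Measurable (X i)
  frechet : ∀ i, ∀ u : ℝ, 0 < u → margCDF μ X i u = Real.exp (-u⁻¹)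
  maxStable : ∀ t : ℝ, 0 < t → ∀ x : Fin d → ℝ, (∀ i, 0 < x i) →
    jointCDF μ X (fun i => t * x i) ^ t = jointCDF μ X x

/-!
Put `s = -log u`. Since the margins are unit Fréchet, `M(I₁)^{1/x} ∨ M(I₂)^{1/y} ≤ u` is almost
surely the event `X_{I₁} ≤ 1/(xs), X_{I₂} ≤ 1/(ys)`, and by max-stability its probability is
`F(1/x, 1/y)^s = u^L` with `L = l^{(I₁,I₂)}(1/x, 1/y)`. So the maximum is `Beta(L, 1)`-distributed,
its mean is `L/(L+1)`, and solving for `L` gives the formula. The identities for the extremal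
coefficients are the one-block case together with the homogeneity `l^{(I,∅)}(1/x, 1/x) = x ε_I`.
-/

open Set Topology

lemma integral_eq_div_of_measureReal_le_eq_rpow {Ω : Type*} [MeasurableSpace Ω] {μ : Measure Ω}
    [IsProbabilityMeasure μ] {V : Ω → ℝ} (hVm : Measurable V)
    (hV0 : ∀ ω, 0 ≤ V ω) (hV1 : ∀ ω, V ω ≤ 1) {L : ℝ} (hL : 0 ≤ L)
    (hcdf : ∀ u ∈ Ioo (0 : ℝ) 1, μ.real {ω | V ω ≤ u} = u ^ L) :
    ∫ ω, V ω ∂μ = L / (L + 1) := by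
  have hint : Integrable V μ :=
    .of_bound hVm.aestronglyMeasurable 1 (ae_of_all _ fun ω => by
      rw [Real.norm_of_nonneg (hV0 ω)]; exact hV1 ω)
  have htail : ∀ t ∈ Ioc (0 : ℝ) 1, μ.real {ω | t < V ω} = 1 - t ^ L := by
    intro t ⟨ht0, ht1⟩
    rw [show {ω | t < V ω} = {ω | V ω ≤ t}ᶜ by ext; simp,
      probReal_compl_eq_one_sub (s := {ω | V ω ≤ t}) (hVm measurableSet_Iic)]
    rcases ht1.lt_or_eq with ht1 | rfl
    · rw [hcdf t ⟨ht0, ht1⟩]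
    · simp [hV1]
  calc ∫ ω, V ω ∂μ = ∫ t in Ioi 0, μ.real {ω | t < V ω} :=
        hint.integral_eq_integral_meas_lt (ae_of_all _ hV0)
    _ = ∫ t in Ioc 0 1, μ.real {ω | t < V ω} := by
        refine setIntegral_eq_of_subset_of_forall_sdiff_eq_zero measurableSet_Ioi
          Ioc_subset_Ioi_self fun t ⟨ht0, ht1⟩ => ?_
        have h1t : 1 < t := not_le.1 fun h => ht1 ⟨ht0, h⟩
        simp [fun ω => not_lt.2 ((hV1 ω).trans h1t.le)]
    _ = ∫ t in (0 : ℝ)..1, (1 - t ^ L) := by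
        rw [intervalIntegral.integral_of_le zero_le_one]
        exact setIntegral_congr_fun measurableSet_Ioc htail
    _ = L / (L + 1) := by
        rw [intervalIntegral.integral_sub intervalIntegrable_const
          (intervalIntegral.intervalIntegrable_rpow' (by linarith)),
          integral_rpow (Or.inl (by linarith))]
        have : L + 1 ≠ 0 := by positivity
        simp only [intervalIntegral.integral_const, sub_zero, smul_eq_mul, mul_one, Real.one_rpow,
          Real.zero_rpow this, one_div]
        field_simp
        ring

lemma exp_neg_inv_le_rpow_iff {v z u : ℝ} (hv : 0 < v) (hz : 0 < z) (hu : u ∈ Ioo (0 : ℝ) 1) :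
    Real.exp (-v⁻¹) ≤ u ^ z ↔ v ≤ (-Real.log u)⁻¹ * z⁻¹ := by
  have hs : 0 < -Real.log u := neg_pos.2 (Real.log_neg hu.1 hu.2)
  rw [Real.rpow_def_of_pos hu.1, Real.exp_le_exp, ← mul_inv,
    le_inv_comm₀ hv (by positivity)]
  constructor <;> intro h <;> linarith

section MEV

variable {Ω : Type*} [MeasurableSpace Ω] {μ : Measure Ω} {d : ℕ} {X : Fin d → Ω → ℝ}

variable (μ X) in
noncomputable def subCDF (S : Finset (Fin d)) (a : Fin d → ℝ) : ℝ :=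
  μ.real {ω | ∀ i ∈ S, X i ω ≤ a i}

lemma subCDF_le_one [IsProbabilityMeasure μ] (S : Finset (Fin d)) (a : Fin d → ℝ) :
    subCDF μ X S a ≤ 1 :=
  measureReal_le_one

lemma mevL_eq_neg_log_subCDF {I₁ I₂ : Finset (Fin d)} (hdisj : Disjoint I₁ I₂) (a b : ℝ) :
    mevL μ X I₁ I₂ a b = -Real.log (subCDF μ X (I₁ ∪ I₂) fun i => if i ∈ I₁ then a else b) := by
  have hset : {ω | (∀ i ∈ I₁, X i ω ≤ a) ∧ ∀ j ∈ I₂, X j ω ≤ b}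
      = {ω | ∀ i ∈ I₁ ∪ I₂, X i ω ≤ if i ∈ I₁ then a else b} := by
    ext ω
    simp only [mem_ofPred_eq, Finset.forall_mem_union]
    refine and_congr (forall₂_congr fun i hi => by rw [if_pos hi]) (forall₂_congr fun j hj => ?_)
    rw [if_neg (Finset.disjoint_right.1 hdisj hj)]
  rw [mevL, hset]
  rfl

lemma extCoef_eq_neg_log_subCDF (I : Finset (Fin d)) :
    extCoef μ X I = -Real.log (subCDF μ X I fun _ => 1) := by
  simp [extCoef, mevL_eq_neg_log_subCDF (Finset.disjoint_empty_right I)]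

lemma tendsto_jointCDF_subCDF [IsFiniteMeasure μ] (S : Finset (Fin d)) (a : Fin d → ℝ) :
    Tendsto (fun r : ℝ => jointCDF μ X fun i => if i ∈ S then a i else r) atTop
      (𝓝 (subCDF μ X S a)) := by
  set A : ℝ → Set Ω := fun r => {ω | ∀ i, X i ω ≤ if i ∈ S then a i else r}
  have hA : Monotone A := fun r r' hr ω hω i => by
    have := hω i
    split_ifs at this ⊢
    exacts [this, this.trans hr]
  have hUnion : ⋃ r, A r = {ω | ∀ i ∈ S, X i ω ≤ a i} := by
    ext ω
    simp only [A, mem_iUnion, mem_ofPred_eq]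
    constructor
    · rintro ⟨r, hr⟩ i hi
      simpa [hi] using hr i
    · intro hω
      obtain ⟨r, hr⟩ := (eventually_all.2 fun i => eventually_ge_atTop (X i ω)).exists
      exact ⟨r, fun i => by split_ifs with hi; exacts [hω i hi, hr i]⟩
  have := tendsto_measure_iUnion_atTop (μ := μ) hA
  rw [hUnion] at this
  exact (ENNReal.tendsto_toReal (measure_ne_top μ _)).comp this

lemma subCDF_smul_rpow [IsFiniteMeasure μ] (hX : IsMEVFrechet μ X) {S : Finset (Fin d)}
    {a : Fin d → ℝ} (ha : ∀ i ∈ S, 0 < a i) {t : ℝ} (ht : 0 < t) :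
    subCDF μ X S (t • a) ^ t = subCDF μ X S a := by
  have hscaled := ((tendsto_jointCDF_subCDF (μ := μ) (X := X) S (t • a)).comp
    (tendsto_id.const_mul_atTop ht)).rpow_const (Or.inr ht.le)
  refine tendsto_nhds_unique (hscaled.congr' ?_) (tendsto_jointCDF_subCDF S a)
  filter_upwards [eventually_gt_atTop 0] with r hr
  have hpos : ∀ i, 0 < if i ∈ S then a i else r := fun i => by
    split_ifs with hi
    exacts [ha i hi, hr]
  rw [← hX.maxStable t ht _ hpos]
  show (jointCDF μ X fun i => if i ∈ S then (t • a) i else t * r) ^ t = _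
  congr 2
  funext i
  split_ifs <;> rfl

lemma subCDF_inv_smul [IsFiniteMeasure μ] (hX : IsMEVFrechet μ X) {S : Finset (Fin d)}
    {a : Fin d → ℝ} (ha : ∀ i ∈ S, 0 < a i) {t : ℝ} (ht : 0 < t) :
    subCDF μ X S (t⁻¹ • a) = subCDF μ X S a ^ t := by
  have ha' : ∀ i ∈ S, 0 < (t⁻¹ • a) i := fun i hi => mul_pos (inv_pos.2 ht) (ha i hi)
  rw [← subCDF_smul_rpow hX ha' ht, smul_inv_smul₀ ht.ne']

/-- By max-stability `subCDF S a = subCDF S ((n + 1) • a) ^ (n + 1)`, and the events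
`X_S ≤ (n + 1) • a` exhaust `Ω`. -/
lemma subCDF_pos [IsProbabilityMeasure μ] (hX : IsMEVFrechet μ X) {S : Finset (Fin d)}
    {a : Fin d → ℝ} (ha : ∀ i ∈ S, 0 < a i) : 0 < subCDF μ X S a := by
  set A : ℕ → Set Ω := fun n => {ω | ∀ i ∈ S, X i ω ≤ ((n + 1 : ℝ) • a) i}
  have hcover : ⋃ n, A n = univ := by
    refine eq_univ_of_forall fun ω => mem_iUnion.2 ?_
    have : ∀ᶠ n : ℕ in atTop, ∀ i ∈ S, X i ω ≤ ((n + 1 : ℝ) • a) i :=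
      (eventually_all_finset S).2 fun i hi =>
        ((tendsto_natCast_atTop_atTop.atTop_add tendsto_const_nhds).atTop_mul_const
          (ha i hi)).eventually_ge_atTop (X i ω)
    exact this.exists
  obtain ⟨n, hn⟩ : ∃ n, μ (A n) ≠ 0 := by
    by_contra! h
    simpa [hcover] using measure_iUnion_null h
  rw [← subCDF_smul_rpow hX ha (t := n + 1) (by positivity)]
  exact Real.rpow_pos_of_pos (ENNReal.toReal_pos hn (measure_ne_top μ _)) _

lemma margCDF_mono [IsFiniteMeasure μ] (i : Fin d) : Monotone (margCDF μ X i) :=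
  fun _ _ huv => ENNReal.toReal_mono (measure_ne_top μ _)
    (measure_mono fun _ hω => le_trans hω huv)

lemma margCDF_zero [IsFiniteMeasure μ] (hX : IsMEVFrechet μ X) (i : Fin d) :
    margCDF μ X i 0 = 0 := by
  have hlim : Tendsto (fun u : ℝ => Real.exp (-u⁻¹)) (𝓝[>] 0) (𝓝 0) :=
    Real.tendsto_exp_atBot.comp (tendsto_neg_atTop_atBot.comp tendsto_inv_nhdsGT_zero)
  refine le_antisymm (ge_of_tendsto hlim ?_) ENNReal.toReal_nonneg
  filter_upwards [self_mem_nhdsWithin] with u hu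
  rw [← hX.frechet i u hu]
  exact margCDF_mono i (le_of_lt hu)

lemma ae_forall_pos [IsFiniteMeasure μ] (hX : IsMEVFrechet μ X) : ∀ᵐ ω ∂μ, ∀ i, 0 < X i ω := by
  refine ae_all_iff.2 fun i => ?_
  have hnull : μ {ω | X i ω ≤ 0} = 0 :=
    ((ENNReal.toReal_eq_zero_iff _).1 (margCDF_zero hX i)).resolve_right (measure_ne_top μ _)
  filter_upwards [measure_eq_zero_iff_ae_notMem.1 hnull] with ω hω
  exact not_le.1 hω

lemma Msub_nonneg (I : Finset (Fin d)) (hI : I.Nonempty) (ω : Ω) : 0 ≤ Msub μ X I hI ω :=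
  let ⟨_, hi⟩ := hI
  ENNReal.toReal_nonneg.trans (Finset.le_sup' (fun j => margCDF μ X j (X j ω)) hi)

lemma Msub_le_one [IsProbabilityMeasure μ] (I : Finset (Fin d)) (hI : I.Nonempty) (ω : Ω) :
    Msub μ X I hI ω ≤ 1 :=
  Finset.sup'_le _ _ fun _ _ => measureReal_le_one

lemma measurable_Msub [IsFiniteMeasure μ] (hX : IsMEVFrechet μ X) (I : Finset (Fin d))
    (hI : I.Nonempty) : Measurable (Msub μ X I hI) := by
  have h : Measurable (I.sup' hI fun i => margCDF μ X i ∘ X i) :=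
    Finset.measurable_sup' hI fun i _ => (margCDF_mono i).measurable.comp (hX.meas i)
  convert h using 1
  ext ω
  simp [Msub, Finset.sup'_apply]

lemma Msub_rpow_inv_le_iff (hX : IsMEVFrechet μ X) (I : Finset (Fin d)) (hI : I.Nonempty)
    {ω : Ω} (hω : ∀ i, 0 < X i ω) {z u : ℝ} (hz : 0 < z) (hu : u ∈ Ioo (0 : ℝ) 1) :
    Msub μ X I hI ω ^ z⁻¹ ≤ u ↔ ∀ i ∈ I, X i ω ≤ (-Real.log u)⁻¹ * z⁻¹ := by
  rw [Real.rpow_inv_le_iff_of_pos (Msub_nonneg I hI ω) hu.1.le hz, Msub, Finset.sup'_le_iff]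
  refine forall₂_congr fun i _ => ?_
  rw [hX.frechet i _ (hω i)]
  exact exp_neg_inv_le_rpow_iff (hω i) hz hu

lemma Msub_rpow_mem_Icc [IsProbabilityMeasure μ] (I : Finset (Fin d)) (hI : I.Nonempty)
    (ω : Ω) {z : ℝ} (hz : 0 < z) : Msub μ X I hI ω ^ z⁻¹ ∈ Icc (0 : ℝ) 1 :=
  ⟨Real.rpow_nonneg (Msub_nonneg I hI ω) _,
    Real.rpow_le_one (Msub_nonneg I hI ω) (Msub_le_one I hI ω) (by positivity)⟩

lemma neg_log_subCDF_eq_integral [IsProbabilityMeasure μ] (hX : IsMEVFrechet μ X)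
    {S : Finset (Fin d)} {c : Fin d → ℝ} (hc : ∀ i ∈ S, 0 < c i) {V : Ω → ℝ}
    (hVm : Measurable V) (hV : ∀ ω, V ω ∈ Icc (0 : ℝ) 1)
    (hlevel : ∀ u ∈ Ioo (0 : ℝ) 1,
      ∀ᵐ ω ∂μ, V ω ≤ u ↔ ∀ i ∈ S, X i ω ≤ (-Real.log u)⁻¹ * c i) :
    -Real.log (subCDF μ X S c) = (∫ ω, V ω ∂μ) / (1 - ∫ ω, V ω ∂μ) := by
  set L := -Real.log (subCDF μ X S c) with hLdef
  have hG := subCDF_pos hX hc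
  have hL : 0 ≤ L := neg_nonneg.2 (Real.log_nonpos hG.le (subCDF_le_one S c))
  have hcdf : ∀ u ∈ Ioo (0 : ℝ) 1, μ.real {ω | V ω ≤ u} = u ^ L := by
    intro u hu
    have hs : 0 < -Real.log u := neg_pos.2 (Real.log_neg hu.1 hu.2)
    calc μ.real {ω | V ω ≤ u} = subCDF μ X S ((-Real.log u)⁻¹ • c) :=
          measureReal_congr (by filter_upwards [hlevel u hu] with ω hω using propext hω)
      _ = subCDF μ X S c ^ (-Real.log u) := subCDF_inv_smul hX hc hs
      _ = u ^ L := by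
          rw [Real.rpow_def_of_pos hG, Real.rpow_def_of_pos hu.1, hLdef]
          ring_nf
  rw [integral_eq_div_of_measureReal_le_eq_rpow hVm (fun ω => (hV ω).1) (fun ω => (hV ω).2) hL
    hcdf]
  have : L + 1 ≠ 0 := by positivity
  field_simp
  ring

lemma mul_extCoef_eq_integral [IsProbabilityMeasure μ] (hX : IsMEVFrechet μ X)
    (I : Finset (Fin d)) (hI : I.Nonempty) {x : ℝ} (hx : 0 < x) :
    x * extCoef μ X I
      = (∫ ω, Msub μ X I hI ω ^ x⁻¹ ∂μ) / (1 - ∫ ω, Msub μ X I hI ω ^ x⁻¹ ∂μ) := by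
  have hone : ∀ i ∈ I, (0 : ℝ) < (fun _ => 1 : Fin d → ℝ) i := fun _ _ => one_pos
  have hscale : subCDF μ X I (fun _ => x⁻¹) = subCDF μ X I (fun _ => 1) ^ x := by
    rw [← subCDF_inv_smul hX hone hx]
    congr 1
    ext
    simp
  rw [extCoef_eq_neg_log_subCDF, ← neg_log_subCDF_eq_integral hX (fun _ _ => inv_pos.2 hx)
    ((measurable_Msub hX I hI).pow_const _) (fun ω => Msub_rpow_mem_Icc I hI ω hx),
    hscale, Real.log_rpow (subCDF_pos hX hone)]
  · ring
  · intro u hu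
    filter_upwards [ae_forall_pos hX] with ω hω
    exact Msub_rpow_inv_le_iff hX I hI hω hx hu

lemma mevL_inv_eq_integral [IsProbabilityMeasure μ] (hX : IsMEVFrechet μ X)
    {I₁ I₂ : Finset (Fin d)} (h1 : I₁.Nonempty) (h2 : I₂.Nonempty) (hdisj : Disjoint I₁ I₂)
    {x y : ℝ} (hx : 0 < x) (hy : 0 < y) :
    mevL μ X I₁ I₂ x⁻¹ y⁻¹
      = (∫ ω, max (Msub μ X I₁ h1 ω ^ x⁻¹) (Msub μ X I₂ h2 ω ^ y⁻¹) ∂μ)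
        / (1 - ∫ ω, max (Msub μ X I₁ h1 ω ^ x⁻¹) (Msub μ X I₂ h2 ω ^ y⁻¹) ∂μ) := by
  rw [mevL_eq_neg_log_subCDF hdisj]
  refine neg_log_subCDF_eq_integral hX (fun i _ => by split_ifs <;> positivity)
    (((measurable_Msub hX I₁ h1).pow_const _).max ((measurable_Msub hX I₂ h2).pow_const _))
    (fun ω => ⟨(Msub_rpow_mem_Icc I₁ h1 ω hx).1.trans (le_max_left _ _),
      max_le (Msub_rpow_mem_Icc I₁ h1 ω hx).2 (Msub_rpow_mem_Icc I₂ h2 ω hy).2⟩) ?_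
  intro u hu
  filter_upwards [ae_forall_pos hX] with ω hω
  rw [max_le_iff, Msub_rpow_inv_le_iff hX I₁ h1 hω hx hu, Msub_rpow_inv_le_iff hX I₂ h2 hω hy hu,
    Finset.forall_mem_union]
  refine and_congr (forall₂_congr fun i hi => by rw [if_pos hi])
    (forall₂_congr fun j hj => by rw [if_neg (Finset.disjoint_right.1 hdisj hj)])

end MEV

/-- For a MEV distribution with unit Fréchet marginals,
`xε_{I₁} = E(M(I₁)^{1/x})/(1 - E(M(I₁)^{1/x}))`,
`yε_{I₂} = E(M(I₂)^{1/y})/(1 - E(M(I₂)^{1/y}))`, and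
`l^{(I₁,I₂)}(x⁻¹,y⁻¹) = E(M(I₁)^{1/x} ∨ M(I₂)^{1/y})/(1 - E(M(I₁)^{1/x} ∨ M(I₂)^{1/y}))`. -/
theorem statement13 {Ω : Type*} [MeasurableSpace Ω] (μ : Measure Ω) [IsProbabilityMeasure μ]
    {d : ℕ} (X : Fin d → Ω → ℝ) (hX : IsMEVFrechet μ X)
    (I₁ I₂ : Finset (Fin d)) (h1 : I₁.Nonempty) (h2 : I₂.Nonempty) (hdisj : Disjoint I₁ I₂)
    (x y : ℝ) (hx : 0 < x) (hy : 0 < y) :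
    x * extCoef μ X I₁
      = (∫ ω, Msub μ X I₁ h1 ω ^ x⁻¹ ∂μ) / (1 - ∫ ω, Msub μ X I₁ h1 ω ^ x⁻¹ ∂μ) ∧
    y * extCoef μ X I₂
      = (∫ ω, Msub μ X I₂ h2 ω ^ y⁻¹ ∂μ) / (1 - ∫ ω, Msub μ X I₂ h2 ω ^ y⁻¹ ∂μ) ∧
    mevL μ X I₁ I₂ x⁻¹ y⁻¹
      = (∫ ω, max (Msub μ X I₁ h1 ω ^ x⁻¹) (Msub μ X I₂ h2 ω ^ y⁻¹) ∂μ)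
        / (1 - ∫ ω, max (Msub μ X I₁ h1 ω ^ x⁻¹) (Msub μ X I₂ h2 ω ^ y⁻¹) ∂μ) :=
  ⟨mul_extCoef_eq_integral hX I₁ h1 hx, mul_extCoef_eq_integral hX I₂ h2 hy,
    mevL_inv_eq_integral hX h1 h2 hdisj hx hy⟩
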